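/- Let n ≥ 3 and 0 ≤ a < (n-2)/2. Suppose u is a positive C² function on the punctured closed unit ball B̄₁(0) \ {0} of ℝⁿ satisfying −div(|x|^{-2a}∇u)(x) ≥ 0 for all x ∈ B̄₁(0) \ {0}. Then there exists a constant K > 0 such that u(x) ≥ K for all x ∈ B̄₁(0) \ {0}. -/

import Mathlib

open MeasureTheory Real Filter Topology

noncomputable section

/-- Coordinate Laplacian on Euclidean space. -/
def lapl {n : ℕ} (w : EuclideanSpace ℝ (Fin n) → ℝ) (x : EuclideanSpace ℝ (Fin n)) : ℝ :=
  ∑ i : Fin n, fderiv ℝ (fun y => fderiv ℝ w y (EuclideanSpace.single i 1)) x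
    (EuclideanSpace.single i 1)

/-- The weighted divergence `div(|x|^(-2a) ∇w)(x) = |x|^(-2a) (Δw(x) - 2a⟨x,∇w(x)⟩/|x|²)`. -/
def wdiv {n : ℕ} (a : ℝ) (w : EuclideanSpace ℝ (Fin n) → ℝ) (x : EuclideanSpace ℝ (Fin n)) : ℝ :=
  ‖x‖ ^ (-(2*a)) * (lapl w x - 2*a * (@inner ℝ _ _ x (gradient w x)) / ‖x‖^2)

/-- Finiteness of the weighted Dirichlet energy `∫ |x|^(-2a) |∇w|² < ∞`. -/
def finiteEnergy {n : ℕ} (a : ℝ) (w : EuclideanSpace ℝ (Fin n) → ℝ) : Prop :=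
  Integrable (fun x : EuclideanSpace ℝ (Fin n) => ‖x‖ ^ (-(2*a)) * ‖gradient w x‖^2)

/-! For `p < 0` with `2p - 2 + n - 2a > 0` the barrier `v(x) = |x|^(2p)` satisfies
`div(|x|^(-2a) ∇v) < 0` away from the origin, so `u + εv` is a strict supersolution. At an
interior local minimum the weighted operator is `≥ 0` (the gradient vanishes and the Laplacian is
`≥ 0`), so on an annulus `δ ≤ |x| ≤ 1` the minimum of `u + εv` sits on the boundary. With `m` the
minimum of `u` on the unit sphere and `δ` so small that `εv ≥ m` on the inner sphere, this gives
`u + εv ≥ m` everywhere; letting `ε → 0` yields `u ≥ m > 0`. -/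

theorem closedBall_diff_ball_mem_nhds {α : Type*} [PseudoMetricSpace α] {c y : α} {r s : ℝ}
    (hr : dist y c < r) (hs : s < dist y c) : Metric.closedBall c r \ Metric.ball c s ∈ 𝓝 y :=
  inter_mem (Metric.closedBall_mem_nhds_of_mem hr) <|
    mem_of_superset (Metric.isClosed_closedBall.isOpen_compl.mem_nhds (by simpa using hs))
      (Set.compl_subset_compl.2 Metric.ball_subset_closedBall)

theorem IsLocalMin.deriv_deriv_nonneg {f : ℝ → ℝ} {x₀ : ℝ} (h : IsLocalMin f x₀)
    (hc : ContinuousAt f x₀) : 0 ≤ deriv (deriv f) x₀ := by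
  by_contra! hneg
  have hmax : IsLocalMax f x₀ := isLocalMax_of_deriv_deriv_neg hneg h.deriv_eq_zero hc
  have hconst : f =ᶠ[𝓝 x₀] fun _ => f x₀ := by
    filter_upwards [h, hmax] with y hy hy' using le_antisymm hy' hy
  rw [hconst.deriv.deriv_eq] at hneg
  simp at hneg

section TwiceDifferentiable

variable {E F : Type*} [NormedAddCommGroup E] [NormedSpace ℝ E] [NormedAddCommGroup F]
  [NormedSpace ℝ F] {f : E → F} {x : E}

theorem ContDiffAt.eventually_differentiableAt (hf : ContDiffAt ℝ 2 f x) :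
    ∀ᶠ y in 𝓝 x, DifferentiableAt ℝ f y :=
  (hf.eventually (by simp)).mono fun _ hy => hy.differentiableAt (by norm_num)

theorem ContDiffAt.differentiableAt_fderiv_apply (hf : ContDiffAt ℝ 2 f x) (v : E) :
    DifferentiableAt ℝ (fun y => fderiv ℝ f y v) x :=
  ((hf.fderiv_right (m := 1) (by norm_num)).differentiableAt (by norm_num)).clm_apply
    (differentiableAt_const v)

end TwiceDifferentiable

section Euclidean

variable {n : ℕ}

local notation "E" => EuclideanSpace ℝ (Fin n)

theorem lapl_nonneg_of_isLocalMin {w : E → ℝ} {x : E} (hw : ContDiffAt ℝ 2 w x)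
    (hmin : IsLocalMin w x) : 0 ≤ lapl w x := by
  refine Finset.sum_nonneg fun i _ => ?_
  set e : E := EuclideanSpace.single i 1
  have hline : ∀ t : ℝ, HasDerivAt (fun s : ℝ => x + s • e) e t := fun t => by
    simpa using ((hasDerivAt_id t).smul_const e).const_add x
  have hcont : ContinuousAt (fun s : ℝ => x + s • e) 0 := (hline 0).continuousAt
  have hx : x = x + (0 : ℝ) • e := by simp
  have htend : Tendsto (fun s : ℝ => x + s • e) (𝓝 0) (𝓝 x) := by simpa using hcont.tendsto
  have hmin' : IsLocalMin (fun s : ℝ => w (x + s • e)) 0 := by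
    simpa [IsLocalMin, IsMinFilter] using htend.eventually hmin
  have hderiv : deriv (fun s : ℝ => w (x + s • e)) =ᶠ[𝓝 0]
      fun s => fderiv ℝ w (x + s • e) e := by
    filter_upwards [htend.eventually hw.eventually_differentiableAt] with s hs
    exact (hs.hasFDerivAt.comp_hasDerivAt s (hline s)).deriv
  have hsecond : HasDerivAt (fun s : ℝ => fderiv ℝ w (x + s • e) e)
      (fderiv ℝ (fun y => fderiv ℝ w y e) x e) 0 :=
    (hw.differentiableAt_fderiv_apply e).hasFDerivAt.comp_hasDerivAt_of_eq 0 (hline 0) hx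
  rw [← hsecond.deriv, ← hderiv.deriv_eq]
  exact hmin'.deriv_deriv_nonneg (hw.continuousAt.comp_of_eq hcont hx.symm)

theorem lapl_add {f g : E → ℝ} {x : E} (hf : ContDiffAt ℝ 2 f x) (hg : ContDiffAt ℝ 2 g x) :
    lapl (f + g) x = lapl f x + lapl g x := by
  simp only [lapl, ← Finset.sum_add_distrib]
  refine Finset.sum_congr rfl fun i _ => ?_
  set e : E := EuclideanSpace.single i 1
  have heq : (fun y => fderiv ℝ (f + g) y e)
      =ᶠ[𝓝 x] (fun y => fderiv ℝ f y e) + fun y => fderiv ℝ g y e := by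
    filter_upwards [hf.eventually_differentiableAt, hg.eventually_differentiableAt] with y hfy hgy
    simp [fderiv_add hfy hgy]
  rw [heq.fderiv_eq, fderiv_add (hf.differentiableAt_fderiv_apply e)
    (hg.differentiableAt_fderiv_apply e)]
  rfl

theorem lapl_const_smul (c : ℝ) (f : E → ℝ) (x : E) : lapl (c • f) x = c * lapl f x := by
  simp only [lapl, Finset.mul_sum, fderiv_const_smul_field]
  refine Finset.sum_congr rfl fun i _ => ?_
  rw [show (fun y => (c • fderiv ℝ f) y (EuclideanSpace.single i 1))
    = c • fun y => fderiv ℝ f y (EuclideanSpace.single i 1) from rfl, fderiv_const_smul_field]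
  rfl

theorem wdiv_eq (a : ℝ) (w : E → ℝ) (x : E) :
    wdiv a w x = ‖x‖ ^ (-(2 * a)) * (lapl w x - 2 * a * fderiv ℝ w x x / ‖x‖ ^ 2) := by
  simp [wdiv, inner_gradient_right]

theorem wdiv_add {f g : E → ℝ} {x : E} (a : ℝ) (hf : ContDiffAt ℝ 2 f x)
    (hg : ContDiffAt ℝ 2 g x) : wdiv a (f + g) x = wdiv a f x + wdiv a g x := by
  simp only [wdiv_eq, lapl_add hf hg, fderiv_add (hf.differentiableAt (by norm_num))
    (hg.differentiableAt (by norm_num))]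
  simp only [add_apply]
  ring

theorem wdiv_const_smul (a c : ℝ) (f : E → ℝ) (x : E) : wdiv a (c • f) x = c * wdiv a f x := by
  simp only [wdiv_eq, lapl_const_smul, fderiv_const_smul_field, Pi.smul_apply, smul_apply,
    smul_eq_mul]
  ring

theorem wdiv_nonneg_of_isLocalMin {w : E → ℝ} {x : E} (a : ℝ) (hw : ContDiffAt ℝ 2 w x)
    (hmin : IsLocalMin w x) : 0 ≤ wdiv a w x := by
  rw [wdiv_eq, hmin.fderiv_eq_zero]
  simpa using mul_nonneg (rpow_nonneg (norm_nonneg x) _) (lapl_nonneg_of_isLocalMin hw hmin)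

theorem hasFDerivAt_normSq_rpow (p : ℝ) {x : E} (hx : x ≠ 0) :
    HasFDerivAt (fun y : E => (‖y‖ ^ 2) ^ p) ((2 * p * (‖x‖ ^ 2) ^ (p - 1)) • innerSL ℝ x) x := by
  have hT : ‖x‖ ^ 2 ≠ 0 := pow_ne_zero 2 (norm_ne_zero_iff.mpr hx)
  refine ((hasDerivAt_rpow_const (p := p) (Or.inl hT)).comp_hasFDerivAt x
    (hasStrictFDerivAt_norm_sq x).hasFDerivAt).congr_fderiv ?_
  ext y
  simp
  ring

theorem contDiffAt_normSq_rpow (p : ℝ) {x : E} (hx : x ≠ 0) {k : WithTop ℕ∞} :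
    ContDiffAt ℝ k (fun y : E => (‖y‖ ^ 2) ^ p) x :=
  contDiff_norm_sq ℝ |>.contDiffAt.rpow_const_of_ne (pow_ne_zero 2 (norm_ne_zero_iff.mpr hx))

theorem fderiv_normSq_rpow_apply_self (p : ℝ) {x : E} (hx : x ≠ 0) :
    fderiv ℝ (fun y : E => (‖y‖ ^ 2) ^ p) x x = 2 * p * (‖x‖ ^ 2) ^ (p - 1) * ‖x‖ ^ 2 := by
  simp [(hasFDerivAt_normSq_rpow p hx).fderiv]

theorem fderiv_normSq_rpow_apply_single_eventuallyEq (p : ℝ) (i : Fin n) {x : E} (hx : x ≠ 0) :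
    (fun y : E => fderiv ℝ (fun z : E => (‖z‖ ^ 2) ^ p) y (EuclideanSpace.single i 1))
      =ᶠ[𝓝 x] fun y : E => 2 * p * (‖y‖ ^ 2) ^ (p - 1) * y i := by
  filter_upwards [isOpen_ne.mem_nhds hx] with y hy
  simp [(hasFDerivAt_normSq_rpow p hy).fderiv, EuclideanSpace.inner_single_right]

theorem lapl_normSq_rpow (p : ℝ) {x : E} (hx : x ≠ 0) :
    lapl (fun y : E => (‖y‖ ^ 2) ^ p) x = 2 * p * (2 * p - 2 + n) * (‖x‖ ^ 2) ^ (p - 1) := by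
  set T := ‖x‖ ^ 2
  have hT : 0 < T := pow_pos (norm_pos_iff.mpr hx) 2
  have hterm : ∀ i : Fin n, fderiv ℝ (fun y => fderiv ℝ (fun z : E => (‖z‖ ^ 2) ^ p) y
      (EuclideanSpace.single i 1)) x (EuclideanSpace.single i 1)
      = 2 * p * T ^ (p - 1) + 4 * p * (p - 1) * T ^ (p - 2) * (x i) ^ 2 := fun i => by
    have hcoord : HasFDerivAt (fun y : E => 2 * p * (‖y‖ ^ 2) ^ (p - 1) * y i) _ x :=
      ((hasFDerivAt_normSq_rpow (p - 1) hx).const_mul (2 * p)).mul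
        (EuclideanSpace.proj (𝕜 := ℝ) i).hasFDerivAt
    rw [(fderiv_normSq_rpow_apply_single_eventuallyEq p i hx).fderiv_eq, hcoord.fderiv]
    simp [EuclideanSpace.inner_single_right, show p - 1 - 1 = p - 2 by ring]
    ring
  have hsum : ∑ i, (x i) ^ 2 = T := by simp [T, EuclideanSpace.norm_sq_eq]
  have hpow : T ^ (p - 2) * T = T ^ (p - 1) := by
    rw [← rpow_add_one hT.ne']; ring_nf
  simp only [lapl, hterm, Finset.sum_add_distrib, ← Finset.mul_sum, hsum, Finset.sum_const,
    Finset.card_univ, Fintype.card_fin, nsmul_eq_mul, mul_assoc, hpow]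
  ring

theorem wdiv_normSq_rpow (a p : ℝ) {x : E} (hx : x ≠ 0) :
    wdiv a (fun y : E => (‖y‖ ^ 2) ^ p) x
      = ‖x‖ ^ (-(2 * a)) * (2 * p * (2 * p - 2 + n - 2 * a) * (‖x‖ ^ 2) ^ (p - 1)) := by
  have hT : ‖x‖ ^ 2 ≠ 0 := pow_ne_zero 2 (norm_ne_zero_iff.mpr hx)
  rw [wdiv_eq, lapl_normSq_rpow p hx, fderiv_normSq_rpow_apply_self p hx]
  field_simp

theorem wdiv_normSq_rpow_neg {a p : ℝ} (hp : p < 0) (hpa : 0 < 2 * p - 2 + n - 2 * a) {x : E}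
    (hx : x ≠ 0) : wdiv a (fun y : E => (‖y‖ ^ 2) ^ p) x < 0 := by
  have hx' : 0 < ‖x‖ := norm_pos_iff.mpr hx
  rw [wdiv_normSq_rpow a p hx]
  exact mul_neg_of_pos_of_neg (rpow_pos_of_pos hx' _) <|
    mul_neg_of_neg_of_pos (mul_neg_of_neg_of_pos (by linarith) hpa)
      (rpow_pos_of_pos (by positivity) _)

theorem IsCompact.le_of_boundary_le_of_wdiv_neg {a m : ℝ} {K B : Set E} {h : E → ℝ}
    (hK : IsCompact K) (hh : ContinuousOn h K)
    (hint : ∀ x ∈ K \ B, K ∈ 𝓝 x ∧ ContDiffAt ℝ 2 h x ∧ wdiv a h x < 0)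
    (hB : ∀ y ∈ K ∩ B, m ≤ h y) {x : E} (hx : x ∈ K) : m ≤ h x := by
  obtain ⟨x₀, hx₀, hmin⟩ := hK.exists_isMinOn ⟨x, hx⟩ hh
  by_cases hx₀B : x₀ ∈ B
  · exact (hB x₀ ⟨hx₀, hx₀B⟩).trans (hmin hx)
  obtain ⟨hnhds, hsmooth, hneg⟩ := hint x₀ ⟨hx₀, hx₀B⟩
  exact absurd (wdiv_nonneg_of_isLocalMin a hsmooth (hmin.isLocalMin hnhds)) hneg.not_ge

theorem tendsto_sq_rpow_nhdsGT_zero {p : ℝ} (hp : p < 0) :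
    Tendsto (fun δ : ℝ => (δ ^ 2) ^ p) (𝓝[>] 0) atTop := by
  refine (tendsto_rpow_neg_nhdsGT_zero (by linarith : 2 * p < 0)).congr' ?_
  filter_upwards [self_mem_nhdsWithin] with δ (hδ : 0 < δ)
  rw [← rpow_natCast, ← rpow_mul hδ.le]
  norm_num

theorem le_add_mul_normSq_rpow_of_supersolution {a p m ε : ℝ} {u : E → ℝ}
    (hu : ContDiffOn ℝ 2 u (Metric.closedBall 0 1 \ {0}))
    (hnonneg : ∀ x ∈ Metric.closedBall (0 : E) 1 \ {0}, 0 ≤ u x)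
    (hsup : ∀ x ∈ Metric.closedBall (0 : E) 1 \ {0}, 0 ≤ -(wdiv a u x))
    (hp : p < 0) (hpa : 0 < 2 * p - 2 + n - 2 * a) (hm : ∀ y ∈ Metric.sphere (0 : E) 1, m ≤ u y)
    (hε : 0 < ε) {x : E} (hx : x ∈ Metric.closedBall (0 : E) 1 \ {0}) :
    m ≤ u x + ε * (‖x‖ ^ 2) ^ p := by
  set v : E → ℝ := fun y => (‖y‖ ^ 2) ^ p
  have hx0 : 0 < ‖x‖ := norm_pos_iff.mpr hx.2
  obtain ⟨δ, hδm, hδ, hδx⟩ : ∃ δ, m ≤ ε * (δ ^ 2) ^ p ∧ δ ∈ Set.Ioc 0 ‖x‖ :=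
    (((tendsto_sq_rpow_nhdsGT_zero hp).const_mul_atTop hε).eventually_ge_atTop m).and
      (Ioc_mem_nhdsGT hx0) |>.exists
  have hann : IsCompact (Metric.closedBall (0 : E) 1 \ Metric.ball 0 δ) :=
    (isCompact_closedBall _ _).diff Metric.isOpen_ball
  have hsub : Metric.closedBall (0 : E) 1 \ Metric.ball 0 δ ⊆ Metric.closedBall 0 1 \ {0} :=
    fun y hy => ⟨hy.1, fun h0 => hy.2 (by simp [Set.mem_singleton_iff.mp h0, hδ])⟩
  suffices m ≤ (u + ε • v) x by simpa [v] using this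
  refine hann.le_of_boundary_le_of_wdiv_neg (a := a) (B := Metric.sphere 0 1 ∪ Metric.sphere 0 δ)
    ?_ ?_ ?_ ⟨hx.1, by simpa using hδx⟩
  · have hv : ContinuousOn v (Metric.closedBall 0 1 \ Metric.ball 0 δ) := fun y hy =>
      (contDiffAt_normSq_rpow p (hsub hy).2 (k := 0)).continuousAt.continuousWithinAt
    exact (hu.continuousOn.mono hsub).add (hv.const_smul ε)
  · rintro y ⟨⟨hy1, hyδ⟩, hyB⟩
    simp only [Set.mem_union, Metric.mem_sphere, dist_zero_right, not_or] at hyB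
    simp only [Metric.mem_closedBall, Metric.mem_ball, dist_zero_right, not_lt] at hy1 hyδ
    have hnhds : Metric.closedBall (0 : E) 1 \ Metric.ball 0 δ ∈ 𝓝 y :=
      closedBall_diff_ball_mem_nhds (by simpa using hy1.lt_of_ne hyB.1)
        (by simpa using hyδ.lt_of_ne' hyB.2)
    have hy0 : y ≠ 0 := (hsub (mem_of_mem_nhds hnhds)).2
    have hu' : ContDiffAt ℝ 2 u y := hu.contDiffAt (mem_of_superset hnhds hsub)
    have hv' : ContDiffAt ℝ 2 (ε • v) y := (contDiffAt_normSq_rpow p hy0).const_smul ε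
    refine ⟨hnhds, hu'.add hv', ?_⟩
    rw [wdiv_add a hu' hv', wdiv_const_smul]
    have := hsup y (hsub (mem_of_mem_nhds hnhds))
    nlinarith [wdiv_normSq_rpow_neg (a := a) hp hpa hy0]
  · rintro y ⟨hyK, hy1 | hyδ⟩
    · have hy1' : ‖y‖ = 1 := by simpa using hy1
      simpa [v, hy1'] using (hm y hy1).trans (le_add_of_nonneg_right hε.le)
    · have hyδ' : ‖y‖ = δ := by simpa using hyδ
      simpa [v, hyδ'] using hδm.trans (le_add_of_nonneg_left (hnonneg y (hsub hyK)))

end Euclidean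

theorem stmt_general {n : ℕ} (hn : 3 ≤ n) (a : ℝ) (ha : a < ((n:ℝ)-2)/2)
    (u : EuclideanSpace ℝ (Fin n) → ℝ)
    (hu : ContDiffOn ℝ 2 u (Metric.closedBall (0 : EuclideanSpace ℝ (Fin n)) 1 \ {0}))
    (hupos : ∀ x ∈ Metric.closedBall (0 : EuclideanSpace ℝ (Fin n)) 1 \ {0}, 0 < u x)
    (hsup : ∀ x ∈ Metric.closedBall (0 : EuclideanSpace ℝ (Fin n)) 1 \ {0},
      0 ≤ -(wdiv a u x)) :
    ∃ K : ℝ, 0 < K ∧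
      ∀ x ∈ Metric.closedBall (0 : EuclideanSpace ℝ (Fin n)) 1 \ {0}, K ≤ u x := by
  have : Nonempty (Fin n) := ⟨⟨0, by omega⟩⟩
  have hsphere : Metric.sphere (0 : EuclideanSpace ℝ (Fin n)) 1 ⊆ Metric.closedBall 0 1 \ {0} :=
    fun y hy => ⟨Metric.sphere_subset_closedBall hy, Metric.ne_of_mem_sphere hy one_ne_zero⟩
  obtain ⟨z, hz, hzmin⟩ := (isCompact_sphere (0 : EuclideanSpace ℝ (Fin n)) 1).exists_isMinOn
    (NormedSpace.sphere_nonempty.mpr zero_le_one) (hu.continuousOn.mono hsphere)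
  refine ⟨u z, hupos z (hsphere hz), fun x hx => le_of_forall_pos_le_add fun η hη => ?_⟩
  obtain ⟨p, hp, hpa⟩ : ∃ p : ℝ, p < 0 ∧ 0 < 2 * p - 2 + n - 2 * a :=
    ⟨-((n - 2 - 2 * a) / 4), by linarith, by linarith⟩
  have hv : 0 < (‖x‖ ^ 2) ^ p := rpow_pos_of_pos (pow_pos (norm_pos_iff.mpr hx.2) 2) p
  have := le_add_mul_normSq_rpow_of_supersolution hu (fun y hy => (hupos y hy).le) hsup hp hpa
    (fun y hy => hzmin hy) (div_pos hη hv) hx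
  rwa [div_mul_cancel₀ η hv.ne'] at this

theorem stmt {n : ℕ} (hn : 3 ≤ n) (a : ℝ) (ha0 : 0 ≤ a) (ha : a < ((n:ℝ)-2)/2)
    (u : EuclideanSpace ℝ (Fin n) → ℝ)
    (hu : ContDiffOn ℝ 2 u (Metric.closedBall (0 : EuclideanSpace ℝ (Fin n)) 1 \ {0}))
    (hupos : ∀ x ∈ Metric.closedBall (0 : EuclideanSpace ℝ (Fin n)) 1 \ {0}, 0 < u x)
    (hsup : ∀ x ∈ Metric.closedBall (0 : EuclideanSpace ℝ (Fin n)) 1 \ {0},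
      0 ≤ -(wdiv a u x)) :
    ∃ K : ℝ, 0 < K ∧
      ∀ x ∈ Metric.closedBall (0 : EuclideanSpace ℝ (Fin n)) 1 \ {0}, K ≤ u x :=
  stmt_general hn a ha u hu hupos hsup
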